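/- arXiv:1612.02791 — 5 statements merged into one kernel-verified Lean document; each statement's English description precedes it below -/
import Mathlib

section
/- Let α ∈ ℂⁿ ⊗ ℂᵐ be a unit vector (in the Hilbert space norm). Then ‖α‖_π = 1 in the projective Banach space tensor norm if and only if there exist scalars t₁,...,tₛ ≥ 0 with Σᵣ tᵣ = 1 and unit vectors y₁,...,yₛ ∈ ℂⁿ, z₁,...,zₛ ∈ ℂᵐ such that α = Σᵣ tᵣ yᵣ ⊗ zᵣ. -/
/-!
The elementary tensors `y ⊗ z` of unit vectors form a compact set, so by Carathéodory's theorem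
their convex hull `K` is compact. A representation `u = ∑ yᵢ ⊗ zᵢ` of value
`r = ∑ ‖yᵢ‖ ‖zᵢ‖ ≥ ‖u‖` exhibits `r⁻¹ • u` as a convex combination of the normalized tensors, so
`r⁻¹ • u ∈ K`; letting `r` decrease to `‖u‖_π` and using that `K` is closed gives
`‖u‖_π⁻¹ • u ∈ K`. For `‖α‖_π = 1` this is the required convex combination; conversely such a
combination is a representation of value `1 = ‖α‖`, the smallest possible value.
-/

/-- The elementary tensor `y ⊗ z` of `y ∈ ℂⁿ` and `z ∈ ℂᵐ`, realized in
`ℂⁿ ⊗ ℂᵐ ≅ ℂ^(n×m)`. -/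
noncomputable def eucTensor {n m : ℕ} (y : EuclideanSpace ℂ (Fin n))
    (z : EuclideanSpace ℂ (Fin m)) : EuclideanSpace ℂ (Fin n × Fin m) :=
  (WithLp.equiv 2 _).symm fun p => y p.1 * z p.2

noncomputable def eucProjNorm (n m : ℕ) (u : EuclideanSpace ℂ (Fin n × Fin m)) : ℝ :=
  sInf {r | ∃ (k : ℕ) (y : Fin k → EuclideanSpace ℂ (Fin n))
    (z : Fin k → EuclideanSpace ℂ (Fin m)),
    u = ∑ i, eucTensor (y i) (z i) ∧ r = ∑ i, ‖y i‖ * ‖z i‖}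

open Set Filter Metric Module

theorem exists_fin_le_finrank_of_mem_convexHull {𝕜 E : Type*} [Field 𝕜] [LinearOrder 𝕜]
    [IsStrictOrderedRing 𝕜] [AddCommGroup E] [Module 𝕜 E] [FiniteDimensional 𝕜 E]
    {s : Set E} {x : E} (hx : x ∈ convexHull 𝕜 s) :
    ∃ k ≤ finrank 𝕜 E + 1, ∃ (w : Fin k → 𝕜) (z : Fin k → E), (∀ i, 0 ≤ w i) ∧
      ∑ i, w i = 1 ∧ (∀ i, z i ∈ s) ∧ ∑ i, w i • z i = x := by
  obtain ⟨ι, _, z, w, hzs, hz, hw₀, hw₁, rfl⟩ := eq_pos_convex_span_of_mem_convexHull hx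
  let e := (Fintype.equivFin ι).symm
  refine ⟨Fintype.card ι, ?_, w ∘ e, z ∘ e, fun i => (hw₀ _).le, ?_, fun i => hzs ⟨_, rfl⟩, ?_⟩
  · exact hz.card_le_finrank_succ.trans (by gcongr; exact Submodule.finrank_le _)
  · rwa [Function.comp_def, e.sum_comp w]
  · exact e.sum_comp fun i => w i • z i

theorem IsCompact.convexHull {E : Type*} [AddCommGroup E] [Module ℝ E] [TopologicalSpace E]
    [IsTopologicalAddGroup E] [ContinuousSMul ℝ E] [FiniteDimensional ℝ E] {s : Set E}
    (hs : IsCompact s) : IsCompact (convexHull ℝ s) := by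
  have hcover : _root_.convexHull ℝ s = ⋃ k ∈ Finset.range (finrank ℝ E + 2),
      (fun wz : (Fin k → ℝ) × (Fin k → E) => ∑ i, wz.1 i • wz.2 i) ''
        (stdSimplex ℝ (Fin k) ×ˢ univ.pi fun _ => s) := by
    ext x
    simp only [mem_iUnion, Finset.mem_range, mem_image, Prod.exists, mem_prod, mem_univ_pi]
    constructor
    · intro hx
      obtain ⟨k, hk, w, z, hw₀, hw₁, hz, rfl⟩ := exists_fin_le_finrank_of_mem_convexHull hx
      exact ⟨k, by omega, w, z, ⟨⟨hw₀, hw₁⟩, hz⟩, rfl⟩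
    · rintro ⟨k, -, w, z, ⟨⟨hw₀, hw₁⟩, hz⟩, rfl⟩
      exact mem_convexHull_of_exists_fintype w z hw₀ hw₁ hz rfl
  rw [hcover]
  exact (Finset.range _).isCompact_biUnion fun k _ =>
    ((isCompact_stdSimplex _ _).prod (isCompact_univ_pi fun _ => hs)).image (by fun_prop)

section EucTensor

variable {n m : ℕ}

@[simp]
lemma eucTensor_apply (y : EuclideanSpace ℂ (Fin n)) (z : EuclideanSpace ℂ (Fin m))
    (p : Fin n × Fin m) : eucTensor y z p = y p.1 * z p.2 := rfl

@[simp]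
lemma eucTensor_zero_left (z : EuclideanSpace ℂ (Fin m)) :
    eucTensor (0 : EuclideanSpace ℂ (Fin n)) z = 0 := by
  ext p; simp

@[simp]
lemma eucTensor_zero_right (y : EuclideanSpace ℂ (Fin n)) :
    eucTensor y (0 : EuclideanSpace ℂ (Fin m)) = 0 := by
  ext p; simp

lemma eucTensor_smul_left (c : ℂ) (y : EuclideanSpace ℂ (Fin n)) (z : EuclideanSpace ℂ (Fin m)) :
    eucTensor (c • y) z = c • eucTensor y z := by
  ext p; simp [mul_assoc]

lemma eucTensor_smul_right (c : ℂ) (y : EuclideanSpace ℂ (Fin n))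
    (z : EuclideanSpace ℂ (Fin m)) : eucTensor y (c • z) = c • eucTensor y z := by
  ext p; simp [mul_left_comm]

lemma norm_eucTensor (y : EuclideanSpace ℂ (Fin n)) (z : EuclideanSpace ℂ (Fin m)) :
    ‖eucTensor y z‖ = ‖y‖ * ‖z‖ := by
  rw [EuclideanSpace.norm_eq, EuclideanSpace.norm_eq, EuclideanSpace.norm_eq,
    ← Real.sqrt_mul (by positivity), Finset.sum_mul_sum, Fintype.sum_prod_type]
  simp [mul_pow]

lemma continuous_eucTensor :
    Continuous fun yz : EuclideanSpace ℂ (Fin n) × EuclideanSpace ℂ (Fin m) =>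
      eucTensor yz.1 yz.2 :=
  (PiLp.continuous_toLp 2 _).comp <| continuous_pi fun p =>
    ((PiLp.continuous_apply 2 _ p.1).comp continuous_fst).mul
      ((PiLp.continuous_apply 2 _ p.2).comp continuous_snd)

lemma eucTensor_eq_norm_mul_norm_smul (y : EuclideanSpace ℂ (Fin n))
    (z : EuclideanSpace ℂ (Fin m)) :
    eucTensor y z = (‖y‖ * ‖z‖) • eucTensor ((‖y‖⁻¹ : ℂ) • y) ((‖z‖⁻¹ : ℂ) • z) := by
  rcases eq_or_ne y 0 with rfl | hy
  · simp
  rcases eq_or_ne z 0 with rfl | hz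
  · simp
  rw [eucTensor_smul_left, eucTensor_smul_right, smul_smul, ← Complex.coe_smul, smul_smul]
  have hy' : (‖y‖ : ℂ) ≠ 0 := by simpa using hy
  have hz' : (‖z‖ : ℂ) ≠ 0 := by simpa using hz
  push_cast
  field_simp
  simp

end EucTensor

def unitTensors (n m : ℕ) : Set (EuclideanSpace ℂ (Fin n × Fin m)) :=
  image2 eucTensor (sphere 0 1) (sphere 0 1)

lemma isCompact_convexHull_unitTensors (n m : ℕ) : IsCompact (convexHull ℝ (unitTensors n m)) := by
  refine IsCompact.convexHull ?_
  rw [unitTensors, ← image_prod]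
  exact ((isCompact_sphere 0 1).prod (isCompact_sphere 0 1)).image continuous_eucTensor

def eucProjNormValues (n m : ℕ) (u : EuclideanSpace ℂ (Fin n × Fin m)) : Set ℝ :=
  {r | ∃ (k : ℕ) (y : Fin k → EuclideanSpace ℂ (Fin n)) (z : Fin k → EuclideanSpace ℂ (Fin m)),
    u = ∑ i, eucTensor (y i) (z i) ∧ r = ∑ i, ‖y i‖ * ‖z i‖}

section EucProjNormValues

variable {n m : ℕ} {u : EuclideanSpace ℂ (Fin n × Fin m)} {r : ℝ}

lemma eucProjNorm_eq_sInf : eucProjNorm n m u = sInf (eucProjNormValues n m u) := rfl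

lemma norm_le_of_mem_eucProjNormValues (hr : r ∈ eucProjNormValues n m u) : ‖u‖ ≤ r := by
  obtain ⟨k, y, z, rfl, rfl⟩ := hr
  simpa only [norm_eucTensor] using norm_sum_le Finset.univ fun i => eucTensor (y i) (z i)

lemma sum_mem_eucProjNormValues {s : ℕ} (t : Fin s → ℝ) (ht : ∀ i, 0 ≤ t i)
    (y : Fin s → EuclideanSpace ℂ (Fin n)) (z : Fin s → EuclideanSpace ℂ (Fin m)) :
    ∑ i, t i * (‖y i‖ * ‖z i‖) ∈
      eucProjNormValues n m (∑ i, (t i : ℂ) • eucTensor (y i) (z i)) := by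
  refine ⟨s, fun i => (t i : ℂ) • y i, z, ?_, ?_⟩
  · simp only [eucTensor_smul_left]
  · simp [norm_smul, ht, abs_of_nonneg, mul_assoc]

lemma inv_smul_mem_convexHull_unitTensors (hr : r ∈ eucProjNormValues n m u) (hr₀ : 0 < r) :
    r⁻¹ • u ∈ convexHull ℝ (unitTensors n m) := by
  obtain ⟨k, y, z, rfl, rfl⟩ := hr
  have hmem := (convex_convexHull ℝ (unitTensors n m)).finsum_mem
    (w := fun i => (∑ j, ‖y j‖ * ‖z j‖)⁻¹ * (‖y i‖ * ‖z i‖))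
    (z := fun i => eucTensor ((‖y i‖⁻¹ : ℂ) • y i) ((‖z i‖⁻¹ : ℂ) • z i))
    (fun i => by positivity) ?_ ?_
  · convert hmem using 1
    rw [finsum_eq_sum_of_fintype, Finset.smul_sum]
    refine Finset.sum_congr rfl fun i _ => ?_
    rw [mul_smul, ← eucTensor_eq_norm_mul_norm_smul]
  · rw [finsum_eq_sum_of_fintype, ← Finset.mul_sum, inv_mul_cancel₀ hr₀.ne']
  · intro i hi
    have hy : y i ≠ 0 := by rintro h; simp [h] at hi
    have hz : z i ≠ 0 := by rintro h; simp [h] at hi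
    exact subset_convexHull ℝ _ <| mem_image2_of_mem
      (mem_sphere_zero_iff_norm.2 (norm_smul_inv_norm (𝕜 := ℂ) hy))
      (mem_sphere_zero_iff_norm.2 (norm_smul_inv_norm (𝕜 := ℂ) hz))

lemma eucProjNorm_inv_smul_mem_convexHull_unitTensors (hne : (eucProjNormValues n m u).Nonempty)
    (hu : u ≠ 0) : (eucProjNorm n m u)⁻¹ • u ∈ convexHull ℝ (unitTensors n m) := by
  have hbdd : BddBelow (eucProjNormValues n m u) :=
    ⟨‖u‖, fun _ => norm_le_of_mem_eucProjNormValues⟩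
  have hpos : 0 < eucProjNorm n m u :=
    (norm_pos_iff.2 hu).trans_le (le_csInf hne fun _ => norm_le_of_mem_eucProjNormValues)
  obtain ⟨r, -, hr_lim, hr_mem⟩ := exists_seq_tendsto_sInf hne hbdd
  refine (isCompact_convexHull_unitTensors n m).isClosed.mem_of_tendsto
    ((hr_lim.inv₀ hpos.ne').smul_const u) (Eventually.of_forall fun k => ?_)
  exact inv_smul_mem_convexHull_unitTensors (hr_mem k)
    ((norm_pos_iff.2 hu).trans_le (norm_le_of_mem_eucProjNormValues (hr_mem k)))

end EucProjNormValues

/-- a unit vector `α ∈ ℂⁿ ⊗ ℂᵐ` has projective tensor norm `1` iff it is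
a convex combination of elementary tensors of unit vectors. -/
theorem projNorm_eq_one_iff_convex_combination (n m : ℕ)
    (α : EuclideanSpace ℂ (Fin n × Fin m)) (hα : ‖α‖ = 1) :
    eucProjNorm n m α = 1 ↔
      ∃ (s : ℕ) (t : Fin s → ℝ) (y : Fin s → EuclideanSpace ℂ (Fin n))
        (z : Fin s → EuclideanSpace ℂ (Fin m)),
        (∀ r, 0 ≤ t r) ∧ (∑ r, t r) = 1 ∧ (∀ r, ‖y r‖ = 1) ∧ (∀ r, ‖z r‖ = 1) ∧
        α = ∑ r, (t r : ℂ) • eucTensor (y r) (z r) := by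
  constructor
  · intro h
    have hne : (eucProjNormValues n m α).Nonempty :=
      nonempty_iff_ne_empty.2 fun he => by simp [eucProjNorm_eq_sInf, he] at h
    have hα₀ : α ≠ 0 := norm_ne_zero_iff.1 (hα ▸ one_ne_zero)
    have hmem := eucProjNorm_inv_smul_mem_convexHull_unitTensors hne hα₀
    rw [h, inv_one, one_smul] at hmem
    obtain ⟨s, -, t, p, ht₀, ht₁, hp, hα_eq⟩ := exists_fin_le_finrank_of_mem_convexHull hmem
    choose y hy z hz hyz using hp
    refine ⟨s, t, y, z, ht₀, ht₁, by simpa using hy, by simpa using hz, ?_⟩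
    simp only [← hα_eq, hyz, Complex.coe_smul]
  · rintro ⟨s, t, y, z, ht₀, ht₁, hy, hz, rfl⟩
    have hone := sum_mem_eucProjNormValues t ht₀ y z
    simp only [hy, hz, mul_one, ht₁] at hone
    exact IsLeast.csInf_eq ⟨hone, fun r hr => hα ▸ norm_le_of_mem_eucProjNormValues hr⟩
end

section
/- The closed unit ball of the operator norm on Mₙ (n×n complex matrices) is the convex hull of the set of unitary matrices in Mₙ. -/
/-! An invertible contraction `x` has a polar decomposition `x = v |x|` with `v` unitary, and
the positive contraction `|x|` is the real part of the unitary `|x| + i √(1 - |x|²)`; hence `x` is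
the midpoint of two unitaries. In finite dimension the spectrum of `x` is finite, so every
contraction is a limit of the invertible contractions `(1 + δ)⁻¹ (x - δ)`, and the midpoints of
pairs of unitaries form a compact set because the unitary group is compact. -/

open scoped Matrix.Norms.L2Operator
open Set Metric Filter Topology

theorem spectrum.finite_of_finiteDimensional {𝕜 A : Type*} [Field 𝕜] [Ring A] [Algebra 𝕜 A]
    [FiniteDimensional 𝕜 A] (a : A) : (spectrum 𝕜 a).Finite := by
  nontriviality A
  have hmin : minpoly 𝕜 a ≠ 0 := minpoly.ne_zero (Algebra.IsIntegral.isIntegral a)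
  refine (Polynomial.finite_setOfPred_isRoot hmin).subset fun z hz => ?_
  have hz0 : (minpoly 𝕜 a).eval z ∈ spectrum 𝕜 (0 : A) := by
    simpa [minpoly.aeval] using spectrum.subset_polynomial_aeval a (minpoly 𝕜 a) ⟨z, hz, rfl⟩
  rwa [spectrum.zero_eq, mem_singleton_iff] at hz0

namespace CStarAlgebra

variable {A : Type*} [CStarAlgebra A]

theorem norm_le_one_of_mem_unitary {u : A} (hu : u ∈ unitary A) : ‖u‖ ≤ 1 := by
  nontriviality A
  exact (CStarRing.norm_of_mem_unitary hu).le

theorem isCompact_unitary [ProperSpace A] : IsCompact (unitary A : Set A) :=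
  isCompact_of_isClosed_isBounded isClosed_unitary
    (isBounded_iff_forall_norm_le.mpr ⟨1, fun _ hu => norm_le_one_of_mem_unitary hu⟩)

section Order

variable [PartialOrder A] [StarOrderedRing A]

theorem norm_sqrt_star_mul_self (x : A) : ‖CFC.sqrt (star x * x)‖ = ‖x‖ := by
  have hsq := CFC.sqrt_mul_sqrt_self (star x * x) (star_mul_self_nonneg x)
  have hsa : IsSelfAdjoint (CFC.sqrt (star x * x)) := (CFC.sqrt_nonneg _).isSelfAdjoint
  have : ‖CFC.sqrt (star x * x)‖ ^ 2 = ‖x‖ ^ 2 := by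
    rw [← hsa.norm_mul_self, hsq, CStarRing.norm_star_mul_self, sq]
  exact (sq_eq_sq₀ (norm_nonneg _) (norm_nonneg _)).mp this

theorem exists_mem_unitary_eq_mul_sqrt_star_mul_self {x : A} (hx : IsUnit x) :
    ∃ v ∈ unitary A, x = v * CFC.sqrt (star x * x) := by
  set a := CFC.sqrt (star x * x)
  have ha : IsUnit a := (CFC.isUnit_sqrt_iff _ (star_mul_self_nonneg x)).mpr (hx.star.mul hx)
  have hsq : a * a = star x * x := CFC.sqrt_mul_sqrt_self (star x * x) (star_mul_self_nonneg x)
  have hinv : IsSelfAdjoint (Ring.inverse a) :=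
    IsSelfAdjoint.ringInverse (CFC.sqrt_nonneg (star x * x)).isSelfAdjoint
  refine ⟨x * Ring.inverse a, (hx.mul ha.ringInverse).mem_unitary_of_star_mul_self ?_, ?_⟩
  · calc star (x * Ring.inverse a) * (x * Ring.inverse a)
          = Ring.inverse a * (a * a) * Ring.inverse a := by
            rw [star_mul, hinv.star_eq, hsq]
            simp only [mul_assoc]
      _ = 1 := by
          rw [← mul_assoc, Ring.inverse_mul_cancel _ ha, one_mul, Ring.mul_inverse_cancel _ ha]
  · rw [Ring.inverse_mul_cancel_right _ _ ha]

end Order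

theorem exists_mem_unitary_midpoint_eq_of_isUnit {x : A} (hx : IsUnit x) (hx1 : ‖x‖ ≤ 1) :
    ∃ u ∈ unitary A, ∃ w ∈ unitary A, midpoint ℝ u w = x := by
  let _ := spectralOrder A
  let _ := spectralOrderedRing A
  obtain ⟨v, hv, hxv⟩ := exists_mem_unitary_eq_mul_sqrt_star_mul_self hx
  let a : selfAdjoint A := ⟨CFC.sqrt (star x * x), (CFC.sqrt_nonneg _).isSelfAdjoint⟩
  have ha1 : ‖a‖ ≤ 1 := (norm_sqrt_star_mul_self x).trans_le hx1
  set u := selfAdjoint.unitarySelfAddISMul a ha1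
  refine ⟨v * u, mul_mem hv u.2, v * star u, mul_mem hv (star u).2, ?_⟩
  have hre : ((2 : ℝ)⁻¹ • (u + star u) : A) = a := by
    rw [Unitary.coe_star, ← realPart_apply_coe]
    exact congrArg Subtype.val (selfAdjoint.realPart_unitarySelfAddISMul a ha1)
  rw [midpoint_eq_smul_add, ← mul_add, invOf_eq_inv, ← mul_smul_comm, hre, hxv]

theorem mem_closure_setOf_isUnit_norm_le_one {a : A} (hfin : (spectrum ℂ a).Finite)
    (ha : ‖a‖ ≤ 1) : a ∈ closure {b : A | IsUnit b ∧ ‖b‖ ≤ 1} := by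
  let f : ℝ → A := fun δ => (1 + δ)⁻¹ • (a - algebraMap ℂ A δ)
  have hf : Tendsto f (𝓝[>] 0) (𝓝 a) := by
    have : ContinuousAt f 0 := by fun_prop (disch := norm_num)
    simpa [f] using this.tendsto.mono_left nhdsWithin_le_nhds
  have hreg : ∀ᶠ δ : ℝ in 𝓝[>] 0, (δ : ℂ) ∉ spectrum ℂ a :=
    (nhdsGT_le_nhdsNE 0).trans (nhdsNE_le_cofinite 0)
      (hfin.preimage Complex.ofReal_injective.injOn).compl_mem_cofinite
  refine mem_closure_of_tendsto hf ?_
  filter_upwards [hreg, self_mem_nhdsWithin] with δ hδ (hδ0 : 0 < δ)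
  refine ⟨?_, ?_⟩
  · rw [show f δ = _ from Algebra.smul_def _ _, ← neg_sub]
    exact (isUnit_iff_ne_zero.mpr (by positivity)).map (algebraMap ℝ A)
      |>.mul (spectrum.notMem_iff.mp hδ).neg
  · have hone : ‖(1 : A)‖ ≤ 1 := norm_le_one_of_mem_unitary (one_mem _)
    have hδ1 : ‖algebraMap ℂ A δ‖ ≤ δ := by
      rw [norm_algebraMap, Complex.norm_real, Real.norm_of_nonneg hδ0.le]
      exact mul_le_of_le_one_right hδ0.le hone
    calc ‖f δ‖ = (1 + δ)⁻¹ * ‖a - algebraMap ℂ A δ‖ := by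
          rw [norm_smul, Real.norm_of_nonneg (by positivity)]
      _ ≤ (1 + δ)⁻¹ * (1 + δ) := by
          gcongr
          exact (norm_sub_le _ _).trans (add_le_add ha hδ1)
      _ = 1 := inv_mul_cancel₀ (by positivity)

theorem closedBall_eq_convexHull_unitary [FiniteDimensional ℂ A] :
    closedBall (0 : A) 1 = convexHull ℝ (unitary A) := by
  have : ProperSpace A := FiniteDimensional.proper ℂ A
  set M := (fun p : A × A => midpoint ℝ p.1 p.2) '' (unitary A ×ˢ unitary A)
  have hM : IsClosed M := by
    refine ((isCompact_unitary.prod isCompact_unitary).image ?_).isClosed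
    simp only [midpoint_eq_smul_add]
    fun_prop
  refine subset_antisymm ?_ (convexHull_min (fun u hu => mem_closedBall_zero_iff.mpr
    (norm_le_one_of_mem_unitary hu)) (convex_closedBall 0 1))
  calc closedBall (0 : A) 1 ⊆ closure {b : A | IsUnit b ∧ ‖b‖ ≤ 1} := fun a ha =>
        mem_closure_setOf_isUnit_norm_le_one (spectrum.finite_of_finiteDimensional a)
          (mem_closedBall_zero_iff.mp ha)
    _ ⊆ M := closure_minimal (fun b ⟨hb, hb1⟩ => by
        obtain ⟨u, hu, w, hw, rfl⟩ := exists_mem_unitary_midpoint_eq_of_isUnit hb hb1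
        exact ⟨(u, w), ⟨hu, hw⟩, rfl⟩) hM
    _ ⊆ convexHull ℝ (unitary A) := by
        rintro _ ⟨⟨u, w⟩, ⟨hu, hw⟩, rfl⟩
        exact (convex_convexHull ℝ _).segment_subset (subset_convexHull ℝ _ hu)
          (subset_convexHull ℝ _ hw) (midpoint_mem_segment u w)

end CStarAlgebra

/-- the closed unit ball of the operator norm on `Mₙ(ℂ)` is the convex
hull of the set of unitary matrices. -/
theorem unitBall_eq_convexHull_unitaryGroup (n : ℕ) :
    {A : Matrix (Fin n) (Fin n) ℂ | ‖A‖ ≤ 1} =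
      convexHull ℝ {A : Matrix (Fin n) (Fin n) ℂ | A ∈ Matrix.unitaryGroup (Fin n) ℂ} := by
  convert CStarAlgebra.closedBall_eq_convexHull_unitary (A := Matrix (Fin n) (Fin n) ℂ) using 1
  · ext A
    simp
  · rfl
end

section
/- Let H be a Hilbert space, let (U_{ij})₁≤i,j≤n and (V_{kℓ})₁≤k,ℓ≤m be operators on H such that U = (U_{ij}) is unitary on ℂⁿ ⊗ H and V = (V_{kℓ}) is unitary on H ⊗ ℂᵐ. Then (U ⊗ I_m)(I_n ⊗ V) = (I_n ⊗ V)(U ⊗ I_m) if and only if U_{ij}V_{kℓ} = V_{kℓ}U_{ij} and U_{ij}*V_{kℓ} = V_{kℓ}U_{ij}* for all i, j, k, ℓ. -/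
open Matrix

/-- if `U = (U_{ij})` and `V = (V_{kℓ})` are unitary block operator
matrices (on `ℂⁿ ⊗ H` and `H ⊗ ℂᵐ` respectively), then the commutation
`(U ⊗ I_m)(I_n ⊗ V) = (I_n ⊗ V)(U ⊗ I_m)` (expressed blockwise: the block matrix of
the products `U_{ij}V_{kℓ}` coincides with that of the products `V_{kℓ}U_{ij}`) holds
iff `U_{ij}V_{kℓ} = V_{kℓ}U_{ij}` and `U_{ij}*V_{kℓ} = V_{kℓ}U_{ij}*` for all `i,j,k,ℓ`. -/
theorem blockUnitary_commute_iff_entries_star_commute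
    {H : Type*} [NormedAddCommGroup H] [InnerProductSpace ℂ H] [CompleteSpace H]
    (n m : ℕ)
    (U : Matrix (Fin n) (Fin n) (H →L[ℂ] H)) (V : Matrix (Fin m) (Fin m) (H →L[ℂ] H))
    (hU₁ : Uᴴ * U = 1) (hU₂ : U * Uᴴ = 1) (hV₁ : Vᴴ * V = 1) (hV₂ : V * Vᴴ = 1) :
    (Matrix.of fun p q : Fin n × Fin m => U p.1 q.1 * V p.2 q.2) =
      (Matrix.of fun p q : Fin n × Fin m => V p.2 q.2 * U p.1 q.1) ↔
    (∀ (i j : Fin n) (k l : Fin m),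
      U i j * V k l = V k l * U i j ∧
      star (U i j) * V k l = V k l * star (U i j)) := by
  constructor
  · intro h i j k l
    have hcomm : ∀ a b : Fin n, U a b * V k l = V k l * U a b := by
      intro a b
      have := congrFun (congrFun h (a, k)) (b, l)
      simpa using this
    refine ⟨hcomm i j, ?_⟩
    set W : Matrix (Fin n) (Fin n) (H →L[ℂ] H) := Matrix.diagonal (fun _ => V k l) with hW
    have hUW : U * W = W * U := by
      ext a b
      simp [hW, Matrix.mul_diagonal, Matrix.diagonal_mul, hcomm a b]
    have hAdj : Uᴴ * W = W * Uᴴ := by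
      calc Uᴴ * W = Uᴴ * W * (U * Uᴴ) := by rw [hU₂, mul_one]
        _ = Uᴴ * (W * U) * Uᴴ := by simp only [mul_assoc]
        _ = Uᴴ * (U * W) * Uᴴ := by rw [hUW]
        _ = (Uᴴ * U) * W * Uᴴ := by simp only [mul_assoc]
        _ = W * Uᴴ := by rw [hU₁, one_mul]
    have := congrFun (congrFun hAdj j) i
    simpa [hW, Matrix.mul_diagonal, Matrix.diagonal_mul, Matrix.conjTranspose_apply]
      using this
  · intro h
    funext p q
    exact (h p.1 q.1 p.2 q.2).1
end

section
/- There is no perfect embezzlement protocol in the tensor product model for the maximally entangled state (1/√n) Σᵢ₌₁ⁿ eᵢ ⊗ eᵢ ∈ ℂⁿ ⊗ ℂᵐ (n ≤ m, n ≥ 2): there do not exist Hilbert spaces R_A, R_B, a unit vector ψ ∈ R_A ⊗ R_B, and unitaries U on ℂⁿ ⊗ R_A and V on R_B ⊗ ℂᵐ such that (U ⊗ I)(I ⊗ V)(e₁ ⊗ ψ ⊗ e₁) = (1/√n) Σᵢ eᵢ ⊗ ψ ⊗ eᵢ. -/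
/-!
The overlap form `(a, b) ↦ ⟪ψ, γ a b⟫` is a bounded bilinear form whose norm is the largest
Schmidt coefficient of `ψ`; it is nonzero because product vectors span a dense subspace. The
first columns of `U` and `V` are isometries, so the embezzlement equation expresses `⟪γ a b, ψ⟫`
as `n^{-1/2} ∑ᵢ ⟪γ (U i 0 a) (V i 0 b), ψ⟫`, and Cauchy–Schwarz over the columns bounds this by
`n^{-1/2}` times the norm of the overlap form. Hence that norm is at most `n^{-1/2}` times
itself, which is impossible for `n ≥ 2`.
-/

open Matrix

namespace Matrix

variable {𝕜 E F ι ι' κ κ' : Type*} [RCLike 𝕜] [NormedAddCommGroup E] [InnerProductSpace 𝕜 E]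
  [CompleteSpace E] [NormedAddCommGroup F] [InnerProductSpace 𝕜 F] [CompleteSpace F]
  [Fintype ι] [DecidableEq ι'] [Fintype κ] [DecidableEq κ']

theorem sum_inner_apply_of_conjTranspose_mul_self_eq_one {U : Matrix ι ι' (E →L[𝕜] E)}
    (hU : Uᴴ * U = 1) (j : ι') (a a' : E) :
    ∑ i, inner 𝕜 (U i j a) (U i j a') = inner 𝕜 a a' := by
  have hcol : ∑ i, star (U i j) * U i j = 1 := by
    simpa [Matrix.mul_apply] using congr_fun (congr_fun hU j) j
  calc ∑ i, inner 𝕜 (U i j a) (U i j a')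
      = inner 𝕜 a ((∑ i, star (U i j) * U i j) a') := by
        simp [_root_.sum_apply, inner_sum, ContinuousLinearMap.star_eq_adjoint,
          ContinuousLinearMap.adjoint_inner_right]
    _ = inner 𝕜 a a' := by rw [hcol, one_apply_eq_self]

theorem sum_norm_sq_apply_of_conjTranspose_mul_self_eq_one {U : Matrix ι ι' (E →L[𝕜] E)}
    (hU : Uᴴ * U = 1) (j : ι') (a : E) : ∑ i, ‖U i j a‖ ^ 2 = ‖a‖ ^ 2 := by
  have h := sum_inner_apply_of_conjTranspose_mul_self_eq_one hU j a a
  simp only [inner_self_eq_norm_sq_to_K] at h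
  exact_mod_cast h

theorem sum_norm_apply_mul_norm_apply_le {U : Matrix ι ι' (E →L[𝕜] E)} (hU : Uᴴ * U = 1)
    {V : Matrix κ κ' (F →L[𝕜] F)} (hV : Vᴴ * V = 1) (e : ι ↪ κ) (j : ι') (l : κ') (a : E) (b : F) :
    ∑ i, ‖U i j a‖ * ‖V (e i) l b‖ ≤ ‖a‖ * ‖b‖ := by
  have hV_partial : ∑ i, ‖V (e i) l b‖ ^ 2 ≤ ‖b‖ ^ 2 := by
    rw [← sum_norm_sq_apply_of_conjTranspose_mul_self_eq_one hV l b,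
      ← Finset.sum_map Finset.univ e fun k => ‖V k l b‖ ^ 2]
    exact Finset.sum_le_univ_sum_of_nonneg fun _ => by positivity
  calc ∑ i, ‖U i j a‖ * ‖V (e i) l b‖
      ≤ √(∑ i, ‖U i j a‖ ^ 2) * √(∑ i, ‖V (e i) l b‖ ^ 2) :=
        Real.sum_mul_le_sqrt_mul_sqrt _ _ _
    _ ≤ √(‖a‖ ^ 2) * √(‖b‖ ^ 2) := by
      rw [sum_norm_sq_apply_of_conjTranspose_mul_self_eq_one hU]
      gcongr
    _ = ‖a‖ * ‖b‖ := by simp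

end Matrix

section TensorModel

variable {RA RB H : Type*}
  [NormedAddCommGroup RA] [InnerProductSpace ℂ RA]
  [NormedAddCommGroup RB] [InnerProductSpace ℂ RB]
  [NormedAddCommGroup H] [InnerProductSpace ℂ H]
  {γ : RA →ₗ[ℂ] RB →ₗ[ℂ] H}

theorem norm_apply_apply_of_inner_apply_apply
    (hγ : ∀ a a' b b', inner ℂ (γ a b) (γ a' b') = inner ℂ a a' * inner ℂ b b')
    (a : RA) (b : RB) : ‖γ a b‖ = ‖a‖ * ‖b‖ := by
  have h := hγ a a b b
  simp only [inner_self_eq_norm_sq_to_K] at h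
  have h' : ‖γ a b‖ ^ 2 = (‖a‖ * ‖b‖) ^ 2 := by rw [mul_pow]; exact_mod_cast h
  exact (pow_left_inj₀ (norm_nonneg _) (by positivity) two_ne_zero).mp h'

/-- `‖overlapForm hγ ψ‖` is the largest Schmidt coefficient of `ψ`. -/
noncomputable def overlapForm
    (hγ : ∀ a a' b b', inner ℂ (γ a b) (γ a' b') = inner ℂ a a' * inner ℂ b b')
    (ψ : H) : RA →L[ℂ] RB →L[ℂ] ℂ :=
  (γ.compr₂ (innerₛₗ ℂ ψ)).mkContinuous₂ ‖ψ‖ fun a b => by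
    calc ‖inner ℂ ψ (γ a b)‖ ≤ ‖ψ‖ * ‖γ a b‖ := norm_inner_le_norm _ _
      _ = ‖ψ‖ * ‖a‖ * ‖b‖ := by rw [norm_apply_apply_of_inner_apply_apply hγ, mul_assoc]

variable (hγ : ∀ a a' b b', inner ℂ (γ a b) (γ a' b') = inner ℂ a a' * inner ℂ b b')
include hγ

@[simp]
theorem overlapForm_apply (ψ : H) (a : RA) (b : RB) :
    overlapForm hγ ψ a b = inner ℂ ψ (γ a b) := rfl

theorem norm_inner_apply_apply_le (ψ : H) (a : RA) (b : RB) :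
    ‖inner ℂ (γ a b) ψ‖ ≤ ‖overlapForm hγ ψ‖ * ‖a‖ * ‖b‖ := by
  rw [norm_inner_symm, ← overlapForm_apply hγ]
  exact ContinuousLinearMap.le_opNorm₂ _ _ _

variable (hdense : (Submodule.span ℂ {h : H | ∃ a b, h = γ a b}).topologicalClosure = ⊤)
include hdense

theorem overlapForm_ne_zero {ψ : H} (hψ : ψ ≠ 0) : overlapForm hγ ψ ≠ 0 := by
  intro hφ
  have hinner : innerSL ℂ ψ = 0 := by
    refine ContinuousLinearMap.ext_on
      (Submodule.dense_iff_topologicalClosure_eq_top.mpr hdense) ?_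
    rintro _ ⟨a, b, rfl⟩
    simpa using congr($hφ a b)
  exact hψ (by simpa using congr(‖$hinner‖))

variable [CompleteSpace RA] [CompleteSpace RB]
  {ι ι' κ κ' : Type*} [Fintype ι] [DecidableEq ι'] [Fintype κ] [DecidableEq κ']
  {U : Matrix ι ι' (RA →L[ℂ] RA)} (hU : Uᴴ * U = 1)
  {V : Matrix κ κ' (RB →L[ℂ] RB)} (hV : Vᴴ * V = 1)
  {W : ι → ι' → κ → κ' → (H →L[ℂ] H)}
  (hW : ∀ i j k l a b, W i j k l (γ a b) = γ (U i j a) (V k l b))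
include hU hV hW

-- On product vectors `x ↦ (W i j k l x)ᵢₖ` is `U_{·j} ⊗ V_{·l}`, a tensor product of isometries.
theorem sum_inner_apply_eq_inner (j : ι') (l : κ') (a : RA) (b : RB) (y : H) :
    ∑ i, ∑ k, inner ℂ (W i j k l (γ a b)) (W i j k l y) = inner ℂ (γ a b) y := by
  let f : H →L[ℂ] ℂ := ∑ i, ∑ k, innerSL ℂ (W i j k l (γ a b)) ∘L W i j k l
  have hf : f = innerSL ℂ (γ a b) := by
    refine ContinuousLinearMap.ext_on
      (Submodule.dense_iff_topologicalClosure_eq_top.mpr hdense) ?_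
    rintro _ ⟨a', b', rfl⟩
    simp only [f, _root_.sum_apply, ContinuousLinearMap.comp_apply,
      innerSL_apply_apply, hW, hγ, ← Finset.sum_mul_sum,
      Matrix.sum_inner_apply_of_conjTranspose_mul_self_eq_one hU,
      Matrix.sum_inner_apply_of_conjTranspose_mul_self_eq_one hV]
  simpa [f] using congr($hf y)

theorem norm_overlapForm_le_of_apply_eq_smul [DecidableEq κ] {ψ : H} (e : ι ↪ κ) (j : ι') (l : κ')
    (c : ℂ) (hemb : ∀ i k, W i j k l ψ = (if k = e i then c else 0) • ψ) :
    ‖overlapForm hγ ψ‖ ≤ ‖c‖ * ‖overlapForm hγ ψ‖ := by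
  set φ := overlapForm hγ ψ
  refine φ.opNorm_le_bound₂ (by positivity) fun a b => ?_
  have hsum : inner ℂ (γ a b) ψ = c * ∑ i, inner ℂ (γ (U i j a) (V (e i) l b)) ψ := by
    rw [← sum_inner_apply_eq_inner hγ hdense hU hV hW j l a b ψ]
    simp [hemb, hW, apply_ite, Finset.mul_sum]
  calc ‖φ a b‖ = ‖c‖ * ‖∑ i, inner ℂ (γ (U i j a) (V (e i) l b)) ψ‖ := by
        rw [overlapForm_apply, norm_inner_symm, hsum, norm_mul]
    _ ≤ ‖c‖ * ∑ i, ‖φ‖ * (‖U i j a‖ * ‖V (e i) l b‖) := by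
        gcongr
        refine (norm_sum_le _ _).trans (Finset.sum_le_sum fun i _ => ?_)
        rw [← mul_assoc]
        exact norm_inner_apply_apply_le hγ ψ _ _
    _ ≤ ‖c‖ * (‖φ‖ * (‖a‖ * ‖b‖)) := by
        rw [← Finset.mul_sum]
        gcongr
        exact Matrix.sum_norm_apply_mul_norm_apply_le hU hV e j l a b
    _ = ‖c‖ * ‖φ‖ * ‖a‖ * ‖b‖ := by ring

end TensorModel

/-- there is no perfect embezzlement protocol in the tensor product model
for the maximally entangled state `(1/√n) ∑ᵢ eᵢ ⊗ eᵢ ∈ ℂⁿ ⊗ ℂᵐ` (`2 ≤ n ≤ m`).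

Encoding: `RA`, `RB` are the resource Hilbert spaces and `H` plays the role of the
Hilbert space tensor product `RA ⊗ RB`, presented by a bilinear map `γ` satisfying
`⟨γ a b, γ a' b'⟩ = ⟨a,a'⟩⟨b,b'⟩` whose range has dense span.  The unitary `U` on
`ℂⁿ ⊗ RA` is given by its block entries `U i j : RA →L RA` (unitarity being
`Uᴴ * U = 1 = U * Uᴴ`), and similarly `V` on `RB ⊗ ℂᵐ`; `W i j k l : H →L H` is the
operator `U_{ij} ⊗ V_{kl}` on `H = RA ⊗ RB`.  The embezzlement equation
`(U ⊗ I)(I ⊗ V)(e₁ ⊗ ψ ⊗ e₁) = (1/√n) ∑ᵢ eᵢ ⊗ ψ ⊗ eᵢ` reads blockwise as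
`W i 0 k 0 ψ = (δ_{ik}/√n) • ψ`, and the theorem says it cannot hold. -/
theorem no_perfect_embezzlement_tensor_model (n m : ℕ) (hn : 2 ≤ n) (hnm : n ≤ m)
    {RA RB H : Type*}
    [NormedAddCommGroup RA] [InnerProductSpace ℂ RA] [CompleteSpace RA]
    [NormedAddCommGroup RB] [InnerProductSpace ℂ RB] [CompleteSpace RB]
    [NormedAddCommGroup H] [InnerProductSpace ℂ H]
    (γ : RA →ₗ[ℂ] RB →ₗ[ℂ] H)
    (hγ : ∀ (a a' : RA) (b b' : RB),
      (inner ℂ (γ a b) (γ a' b') : ℂ) = (inner ℂ a a' : ℂ) * (inner ℂ b b' : ℂ))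
    (hdense : (Submodule.span ℂ {h : H | ∃ a b, h = γ a b}).topologicalClosure = ⊤)
    (ψ : H) (hψ : ‖ψ‖ = 1)
    (U : Matrix (Fin n) (Fin n) (RA →L[ℂ] RA))
    (hU₁ : Uᴴ * U = 1)
    (V : Matrix (Fin m) (Fin m) (RB →L[ℂ] RB))
    (hV₁ : Vᴴ * V = 1)
    (W : Fin n → Fin n → Fin m → Fin m → (H →L[ℂ] H))
    (hW : ∀ (i j : Fin n) (k l : Fin m) (a : RA) (b : RB),
      W i j k l (γ a b) = γ (U i j a) (V k l b)) :
    ¬ (∀ (i : Fin n) (k : Fin m),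
        W i ⟨0, by omega⟩ k ⟨0, by omega⟩ ψ =
          (if (i : ℕ) = (k : ℕ) then ((Real.sqrt n : ℂ))⁻¹ else 0) • ψ) := by
  intro hemb
  have hemb' : ∀ i k, W i ⟨0, by omega⟩ k ⟨0, by omega⟩ ψ =
      (if k = Fin.castLEEmb hnm i then ((Real.sqrt n : ℂ))⁻¹ else 0) • ψ := by
    intro i k
    simp only [hemb, Fin.ext_iff, Fin.castLEEmb_apply, Fin.val_castLE, eq_comm]
  have hle := norm_overlapForm_le_of_apply_eq_smul hγ hdense hU₁ hV₁ hW _ _ _ _ hemb'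
  have hc : ‖((Real.sqrt n : ℂ))⁻¹‖ < 1 := by
    rw [norm_inv, Complex.norm_real, Real.norm_of_nonneg (Real.sqrt_nonneg _)]
    have hn' : (1 : ℝ) ^ 2 < n := by exact_mod_cast (by omega : 1 ^ 2 < n)
    exact inv_lt_one_of_one_lt₀ ((Real.lt_sqrt zero_le_one).mpr hn')
  have hψ' : ψ ≠ 0 := by rw [← norm_ne_zero_iff, hψ]; exact one_ne_zero
  refine overlapForm_ne_zero hγ hdense hψ' ((overlapForm hγ ψ).opNorm_zero_iff.mp ?_)
  nlinarith [norm_nonneg (overlapForm hγ ψ)]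
end

section
/- Let U = (U_{ij}) ∈ Mₙ(B(R)), V = (V_{kℓ}) ∈ Mₘ(B(R)) be unitaries with pairwise commuting entries, ψ ∈ R a unit vector, and suppose ⟨U_{i1}V_{j1}ψ, ψ⟩ = α_{ij} where Σ_{i,j} |α_{ij}|² = 1. Then U_{i1}V_{j1}ψ = α_{ij}ψ for all i, j, and consequently (U ⊗ I_m)(I_n ⊗ V)(e₁ ⊗ ψ ⊗ e₁) = Σ_{i,j} α_{ij} eᵢ ⊗ ψ ⊗ eⱼ. -/
/-!
Since `Uᴴ * U = 1` and `Vᴴ * V = 1`, the vectors `U_{i1} V_{j1} ψ` have total squared norm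
`‖ψ‖² = 1`. By Cauchy–Schwarz each `|α_{ij}|²` is at most `‖U_{i1} V_{j1} ψ‖²`, and both families
sum to `1`, so equality holds in every instance of Cauchy–Schwarz, which makes each
`U_{i1} V_{j1} ψ` a multiple of `ψ`.
-/

open Matrix

section ColumnIsometry

variable {𝕜 E ι κ : Type*} [RCLike 𝕜] [NormedAddCommGroup E] [InnerProductSpace 𝕜 E]
  [CompleteSpace E] [Fintype ι] [DecidableEq κ]

theorem Matrix.sum_norm_sq_apply_of_conjTranspose_mul_self_eq_one_s15
    {U : Matrix ι κ (E →L[𝕜] E)} (hU : Uᴴ * U = 1) (k : κ) (x : E) :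
    ∑ i, ‖U i k x‖ ^ 2 = ‖x‖ ^ 2 := by
  calc ∑ i, ‖U i k x‖ ^ 2 = ∑ i, RCLike.re (inner 𝕜 x ((Uᴴ k i * U i k) x)) := by
        simp only [ContinuousLinearMap.apply_norm_sq_eq_inner_adjoint_right, conjTranspose_apply,
          ContinuousLinearMap.star_eq_adjoint, ContinuousLinearMap.mul_def]
    _ = RCLike.re (inner 𝕜 x ((Uᴴ * U) k k x)) := by
        rw [mul_apply, _root_.sum_apply, inner_sum, map_sum]
    _ = ‖x‖ ^ 2 := by
        rw [hU, one_apply_eq, one_apply_eq_self, inner_self_eq_norm_sq]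

end ColumnIsometry

section CauchySchwarzEquality

variable {𝕜 E : Type*} [RCLike 𝕜] [NormedAddCommGroup E] [InnerProductSpace 𝕜 E]

theorem eq_inner_smul_of_norm_inner_eq {ψ x : E} (hψ : ‖ψ‖ = 1)
    (h : ‖(inner 𝕜 ψ x : 𝕜)‖ = ‖x‖) : x = inner 𝕜 ψ x • ψ := by
  have hψ₀ : ψ ≠ 0 := norm_ne_zero_iff.mp (by rw [hψ]; exact one_ne_zero)
  obtain hψ₀' | hx := ((norm_inner_eq_norm_tfae 𝕜 ψ x).out 0 1).mp (by rw [h, hψ, one_mul])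
  · exact absurd hψ₀' hψ₀
  · rwa [inner_self_eq_norm_sq_to_K, hψ, RCLike.ofReal_one, one_pow, div_one] at hx

theorem eq_inner_smul_of_sum_norm_sq_le {ι : Type*} [Fintype ι] {ψ : E} (hψ : ‖ψ‖ = 1)
    (x : ι → E) (h : ∑ i, ‖x i‖ ^ 2 ≤ ∑ i, ‖(inner 𝕜 ψ (x i) : 𝕜)‖ ^ 2) (i : ι) :
    x i = inner 𝕜 ψ (x i) • ψ := by
  have hcs : ∀ i, ‖(inner 𝕜 ψ (x i) : 𝕜)‖ ^ 2 ≤ ‖x i‖ ^ 2 := fun i => by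
    gcongr
    simpa [hψ] using norm_inner_le_norm (𝕜 := 𝕜) ψ (x i)
  have hsq := (Finset.sum_eq_sum_iff_of_le fun i _ => hcs i).mp
    (le_antisymm (Finset.sum_le_sum fun i _ => hcs i) h) i (Finset.mem_univ i)
  exact eq_inner_smul_of_norm_inner_eq hψ
    ((sq_eq_sq₀ (norm_nonneg _) (norm_nonneg _)).mp hsq)

end CauchySchwarzEquality

theorem embezzlement_cauchy_schwarz_general
    {R : Type*} [NormedAddCommGroup R] [InnerProductSpace ℂ R] [CompleteSpace R]
    (n m : ℕ) (hn : 0 < n) (hm : 0 < m)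
    (U : Matrix (Fin n) (Fin n) (R →L[ℂ] R))
    (hU₁ : Uᴴ * U = 1)
    (V : Matrix (Fin m) (Fin m) (R →L[ℂ] R))
    (hV₁ : Vᴴ * V = 1)
    (ψ : R) (hψ : ‖ψ‖ = 1)
    (α : Fin n → Fin m → ℂ)
    (hα : ∀ (i : Fin n) (j : Fin m),
      (inner ℂ ψ ((U i ⟨0, hn⟩) ((V j ⟨0, hm⟩) ψ)) : ℂ) = α i j)
    (hnorm : ∑ i, ∑ j, ‖α i j‖ ^ 2 = 1) :
    ∀ (i : Fin n) (j : Fin m), (U i ⟨0, hn⟩) ((V j ⟨0, hm⟩) ψ) = α i j • ψ := by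
  intro i j
  let x : Fin n × Fin m → R := fun p => U p.1 ⟨0, hn⟩ (V p.2 ⟨0, hm⟩ ψ)
  have hx : ∑ p, ‖x p‖ ^ 2 = 1 := by
    rw [Fintype.sum_prod_type, Finset.sum_comm]
    simp only [x, sum_norm_sq_apply_of_conjTranspose_mul_self_eq_one_s15 hU₁,
      sum_norm_sq_apply_of_conjTranspose_mul_self_eq_one_s15 hV₁, hψ, one_pow]
  have hαx : ∑ p, ‖(inner ℂ ψ (x p) : ℂ)‖ ^ 2 = 1 := by
    rw [Fintype.sum_prod_type, ← hnorm]
    simp only [x, hα]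
  have := eq_inner_smul_of_sum_norm_sq_le hψ x (hx.trans hαx.symm).le (i, j)
  rwa [hα] at this

/-- if `U`, `V` are unitary block operator matrices with pairwise
commuting entries, `ψ` a unit vector and `⟨U_{i1}V_{j1}ψ, ψ⟩ = α_{ij}` with
`∑ |α_{ij}|² = 1`, then `U_{i1}V_{j1}ψ = α_{ij}ψ` for all `i, j`; blockwise this says
exactly that `(U ⊗ I_m)(I_n ⊗ V)(e₁ ⊗ ψ ⊗ e₁) = ∑ α_{ij} eᵢ ⊗ ψ ⊗ eⱼ`. -/
theorem embezzlement_cauchy_schwarz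
    {R : Type*} [NormedAddCommGroup R] [InnerProductSpace ℂ R] [CompleteSpace R]
    (n m : ℕ) (hn : 0 < n) (hm : 0 < m)
    (U : Matrix (Fin n) (Fin n) (R →L[ℂ] R))
    (hU₁ : Uᴴ * U = 1) (hU₂ : U * Uᴴ = 1)
    (V : Matrix (Fin m) (Fin m) (R →L[ℂ] R))
    (hV₁ : Vᴴ * V = 1) (hV₂ : V * Vᴴ = 1)
    (hcomm : ∀ (i j : Fin n) (k l : Fin m), U i j * V k l = V k l * U i j)
    (ψ : R) (hψ : ‖ψ‖ = 1)
    (α : Fin n → Fin m → ℂ)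
    (hα : ∀ (i : Fin n) (j : Fin m),
      (inner ℂ ψ ((U i ⟨0, hn⟩) ((V j ⟨0, hm⟩) ψ)) : ℂ) = α i j)
    (hnorm : ∑ i, ∑ j, ‖α i j‖ ^ 2 = 1) :
    ∀ (i : Fin n) (j : Fin m), (U i ⟨0, hn⟩) ((V j ⟨0, hm⟩) ψ) = α i j • ψ :=
  embezzlement_cauchy_schwarz_general n m hn hm U hU₁ V hV₁ ψ hψ α hα hnorm
end
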